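/- Let F : E → R be strictly convex and let v_N ⇀ v weakly in L^p((0,T)×Ω; E) with ∫∫ F(v_N) → ∫∫ F(v) and F satisfying p-growth bounds c₁|z|^p − c ≤ F(z) ≤ c₂|z|^p + c, p > 1. Then v_N → v strongly in L^1((0,T)×Ω; E) along a subsequence converging almost everywhere. -/

import Mathlib

/-!
Write `gap_w(z) = (F z + F w)/2 - F((z + w)/2) ≥ 0`. The integral functional `u ↦ ∫ F ∘ u` is
weakly lower semicontinuous; applied to the midpoints `(v_N + v)/2 ⇀ v` and combined with
`∫ F(v_N) → ∫ F(v)`, this gives `∫ gap_v(v_N) → 0`, hence `gap_v(v_N) → 0` almost everywhere along a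
subsequence. Strict convexity turns this into `v_N → v`: along each ray from `w` the gap `gap_w` is
nondecreasing, so away from `w` it is bounded below by its minimum on a small sphere, which is
positive.

Lower semicontinuity needs affine minorants of `F` depending measurably on the point. They come
from proximal points `P_k w`, minimizers of `F + k‖· - w‖²`: the subgradient `2k (w - P_k w)` at
`P_k w` is continuous in `w` (the proximal map is `1`-Lipschitz), has `(p-1)`-growth (so it is an
admissible test function in `L^{p/(p-1)}`), and `P_k w → w`.

Finally the lower growth bound on `F` bounds `v_N` in `L^p` with `p > 1`, so the sequence is
uniformly integrable and Vitali's theorem upgrades a.e. convergence to `L¹` convergence.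
-/

open MeasureTheory Filter
open Set Metric RealInnerProductSpace
open scoped ENNReal NNReal Topology

section ProxPoint

variable {E : Type*} [NormedAddCommGroup E]

def IsProxPoint (F : E → ℝ) (a : ℝ) (w x : E) : Prop :=
  ∀ z, F x + a * ‖x - w‖ ^ 2 ≤ F z + a * ‖z - w‖ ^ 2

theorem exists_isProxPoint [ProperSpace E] {F : E → ℝ} (hF : Continuous F) {m : ℝ}
    (hm : ∀ z, m ≤ F z) {a : ℝ} (ha : 0 < a) (w : E) : ∃ x, IsProxPoint F a w x := by
  refine (by fun_prop : Continuous fun z => F z + a * ‖z - w‖ ^ 2).exists_forall_le ?_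
  have hcoer : Tendsto (fun z : E => a * ‖z - w‖ ^ 2) (cocompact E) atTop := by
    simpa only [dist_eq_norm, Function.comp_def] using
      ((tendsto_pow_atTop two_ne_zero).comp
        (tendsto_dist_right_cocompact_atTop w)).const_mul_atTop ha
  exact tendsto_atTop_add_left_of_le _ m hm hcoer

namespace IsProxPoint

variable {F : E → ℝ} {a : ℝ} {w x : E}

theorem apply_le (hx : IsProxPoint F a w x) (ha : 0 ≤ a) : F x ≤ F w := by
  have := hx w
  simp only [sub_self, norm_zero] at this
  nlinarith [sq_nonneg ‖x - w‖]

theorem mul_norm_sub_sq_le (hx : IsProxPoint F a w x) {m : ℝ} (hm : ∀ z, m ≤ F z) :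
    a * ‖x - w‖ ^ 2 ≤ F w - m := by
  have := hx w
  simp only [sub_self, norm_zero] at this
  linarith [hm x]

theorem tendsto {m : ℝ} (hm : ∀ z, m ≤ F z) {ι : Type*} {l : Filter ι} {a : ι → ℝ}
    (ha : Tendsto a l atTop) {x : ι → E} (hx : ∀ i, IsProxPoint F (a i) w (x i)) :
    Tendsto x l (𝓝 w) := by
  rw [tendsto_iff_norm_sub_tendsto_zero]
  have hbound : Tendsto (fun i => √((F w - m) / a i)) l (𝓝 0) := by
    simpa [Function.comp_def] using
      (Real.continuous_sqrt.tendsto 0).comp (tendsto_const_nhds.div_atTop ha)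
  refine squeeze_zero' (Eventually.of_forall fun i => norm_nonneg _) ?_ hbound
  filter_upwards [ha.eventually_gt_atTop 0] with i hi
  refine Real.le_sqrt_of_sq_le ((le_div_iff₀ hi).2 ?_)
  linarith [(hx i).mul_norm_sub_sq_le hm]

end IsProxPoint

end ProxPoint

section Subgradient

variable {E : Type*} [NormedAddCommGroup E] [InnerProductSpace ℝ E] {F : E → ℝ}

def IsSubgradientAt (F : E → ℝ) (x ξ : E) : Prop := ∀ y, F x + ⟪ξ, y - x⟫ ≤ F y

theorem IsProxPoint.isSubgradientAt {a : ℝ} {w x : E} (hx : IsProxPoint F a w x)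
    (hF : ConvexOn ℝ univ F) : IsSubgradientAt F x ((2 * a) • (w - x)) := by
  intro u
  -- compare `x` with `x + t (u - x)` in the proximal problem and let `t → 0⁺`
  have key : ∀ t ∈ Ioc (0 : ℝ) 1,
      F x + ⟪(2 * a) • (w - x), u - x⟫ ≤ F u + t * (a * ‖u - x‖ ^ 2) := by
    rintro t ⟨ht0, ht1⟩
    have hconv : F (x + t • (u - x)) ≤ (1 - t) * F x + t * F u := by
      have h := hF.2 (mem_univ x) (mem_univ u) (sub_nonneg.2 ht1) ht0.le (sub_add_cancel 1 t)
      rwa [show (1 - t) • x + t • u = x + t • (u - x) by module] at h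
    have hmin := hx (x + t • (u - x))
    rw [show x + t • (u - x) - w = (x - w) + t • (u - x) by abel, norm_add_sq_real,
      inner_smul_right, norm_smul, Real.norm_of_nonneg ht0.le] at hmin
    have hinner : ⟪(2 * a) • (w - x), u - x⟫ = -(2 * a * ⟪x - w, u - x⟫) := by
      rw [inner_smul_left, ← neg_sub x w, inner_neg_left]
      simp
    rw [hinner]
    have h : 0 ≤ t * (F u - F x + 2 * a * ⟪x - w, u - x⟫ + a * t * ‖u - x‖ ^ 2) := by
      nlinarith
    nlinarith [nonneg_of_mul_nonneg_right h ht0]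
  have hlim : Tendsto (fun t : ℝ => F u + t * (a * ‖u - x‖ ^ 2)) (𝓝[>] 0) (𝓝 (F u)) := by
    have : Tendsto (fun t : ℝ => F u + t * (a * ‖u - x‖ ^ 2)) (𝓝 0) (𝓝 (F u + 0 * _)) :=
      (continuous_const.add (continuous_id.mul continuous_const)).tendsto 0
    simpa using this.mono_left nhdsWithin_le_nhds
  exact ge_of_tendsto hlim (eventually_of_mem (Ioc_mem_nhdsGT one_pos) key)

theorem lipschitzWith_one_of_isSubgradientAt {a : ℝ} (ha : 0 < a) {P : E → E}
    (hP : ∀ w, IsSubgradientAt F (P w) ((2 * a) • (w - P w))) : LipschitzWith 1 P := by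
  refine LipschitzWith.of_dist_le_mul fun w₁ w₂ => ?_
  have h₁ := hP w₁ (P w₂)
  have h₂ := hP w₂ (P w₁)
  rw [inner_smul_left] at h₁ h₂
  simp only [conj_trivial] at h₁ h₂
  -- adding the two subgradient inequalities: `P` is firmly nonexpansive
  have hmono : ‖P w₁ - P w₂‖ ^ 2 ≤ ⟪w₁ - w₂, P w₁ - P w₂⟫ := by
    have e : ⟪w₁ - w₂, P w₁ - P w₂⟫ - ‖P w₁ - P w₂‖ ^ 2 =
        -(⟪w₁ - P w₁, P w₂ - P w₁⟫ + ⟪w₂ - P w₂, P w₁ - P w₂⟫) := by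
      rw [← real_inner_self_eq_norm_sq]
      simp only [inner_sub_left, inner_sub_right, real_inner_comm]
      ring
    nlinarith
  rw [NNReal.coe_one, one_mul, dist_eq_norm, dist_eq_norm]
  have := real_inner_le_norm (w₁ - w₂) (P w₁ - P w₂)
  nlinarith [norm_nonneg (P w₁ - P w₂), norm_nonneg (w₁ - w₂)]

theorem IsSubgradientAt.exists_norm_mul_le {x ξ : E} (hξ : IsSubgradientAt F x ξ) {R : ℝ}
    (hR : 0 ≤ R) : ∃ y, ‖y - x‖ ≤ R ∧ ‖ξ‖ * R ≤ F y - F x := by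
  refine ⟨x + (R / ‖ξ‖) • ξ, ?_, ?_⟩
  · rw [add_sub_cancel_left, norm_smul, Real.norm_of_nonneg (by positivity)]
    rcases eq_or_ne ‖ξ‖ 0 with h | h
    · simp [h, hR]
    · rw [div_mul_cancel₀ _ h]
  · have := hξ (x + (R / ‖ξ‖) • ξ)
    rw [add_sub_cancel_left, inner_smul_right, real_inner_self_eq_norm_sq] at this
    rcases eq_or_ne ‖ξ‖ 0 with h | h
    · simp only [h] at this ⊢
      linarith
    · field_simp at this
      linarith

theorem IsSubgradientAt.norm_le_mul_rpow {p c c₂ : ℝ} (hp : 1 ≤ p) (hc : 0 ≤ c) (hc₂ : 0 ≤ c₂)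
    (hlow : ∀ z, -c ≤ F z) (hup : ∀ z, F z ≤ c₂ * ‖z‖ ^ p + c) {x ξ w : E}
    (hξ : IsSubgradientAt F x ξ) {C : ℝ} (hx : ‖x‖ ≤ C * (1 + ‖w‖)) :
    ‖ξ‖ ≤ (c₂ * (C + 1) ^ p + 2 * c) * (1 + ‖w‖) ^ (p - 1) := by
  set R := 1 + ‖w‖
  have hR : 1 ≤ R := le_add_of_nonneg_right (norm_nonneg w)
  have hC : 0 ≤ C + 1 := by nlinarith [norm_nonneg x]
  obtain ⟨y, hyx, hy⟩ := hξ.exists_norm_mul_le (by positivity : 0 ≤ R)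
  have hy_norm : ‖y‖ ≤ (C + 1) * R := by linarith [norm_sub_norm_le y x]
  have hy_pow : ‖y‖ ^ p ≤ (C + 1) ^ p * R ^ p := by
    rw [← Real.mul_rpow hC (by positivity)]
    exact Real.rpow_le_rpow (norm_nonneg y) hy_norm (by linarith)
  have hRp : R ^ p = R ^ (p - 1) * R := by
    rw [Real.rpow_sub_one (by positivity : R ≠ 0), div_mul_cancel₀ _ (by positivity)]
  have hRp1 : 1 ≤ R ^ (p - 1) := Real.one_le_rpow hR (by linarith)
  have hCp : 0 ≤ (C + 1) ^ p := Real.rpow_nonneg hC p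
  refine le_of_mul_le_mul_right ?_ (by positivity : 0 < R)
  calc ‖ξ‖ * R ≤ c₂ * ‖y‖ ^ p + 2 * c := by linarith [hup y, hlow x]
    _ ≤ c₂ * ((C + 1) ^ p * R ^ p) + 2 * c := by gcongr
    _ ≤ (c₂ * (C + 1) ^ p + 2 * c) * R ^ (p - 1) * R := by
      rw [hRp]
      nlinarith [mul_nonneg hc (by nlinarith : 0 ≤ R ^ (p - 1) * R - 1)]

end Subgradient

theorem ConvexOn.monotoneOn_sub_two_mul_apply_half {g : ℝ → ℝ} (hg : ConvexOn ℝ univ g) :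
    MonotoneOn (fun t => g t - 2 * g (t / 2)) (Ici 0) := by
  intro s (hs : 0 ≤ s) t _ hst
  rcases hst.eq_or_lt with rfl | hst
  · rfl
  -- the slope of `g` on `[s/2, t/2]` is at most its slope on `[s, t]`
  have h₁ := hg.secant_mono (mem_univ (s / 2)) (mem_univ (t / 2)) (mem_univ t)
    (by linarith) (by linarith) (by linarith)
  have h₂ := hg.secant_mono (mem_univ t) (mem_univ (s / 2)) (mem_univ s)
    (by linarith) (by linarith) (by linarith)
  rw [div_le_div_iff₀ (by linarith) (by linarith)] at h₁
  rw [← neg_div_neg_eq, neg_sub, neg_sub, ← neg_div_neg_eq (g s - g t), neg_sub, neg_sub,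
    div_le_div_iff₀ (by linarith) (by linarith)] at h₂
  dsimp only
  nlinarith

section MidpointGap

variable {E : Type*} [NormedAddCommGroup E] [NormedSpace ℝ E]

noncomputable def midpointGap (F : E → ℝ) (w z : E) : ℝ :=
  (F z + F w) / 2 - F (midpoint ℝ z w)

variable {F : E → ℝ} {w : E}

theorem ConvexOn.midpointGap_nonneg (hF : ConvexOn ℝ univ F) (z : E) :
    0 ≤ midpointGap F w z := by
  have := hF.2 (mem_univ z) (mem_univ w) (by norm_num : (0 : ℝ) ≤ 1 / 2)
    (by norm_num : (0 : ℝ) ≤ 1 / 2) (by norm_num)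
  rw [midpointGap, midpoint_eq_smul_add, smul_add]
  simp only [smul_eq_mul, invOf_eq_inv] at this ⊢
  linarith

theorem StrictConvexOn.midpointGap_pos (hF : StrictConvexOn ℝ univ F) {z : E} (hz : z ≠ w) :
    0 < midpointGap F w z := by
  have := hF.2 (mem_univ z) (mem_univ w) hz (by norm_num : (0 : ℝ) < 1 / 2)
    (by norm_num : (0 : ℝ) < 1 / 2) (by norm_num)
  rw [midpointGap, midpoint_eq_smul_add, smul_add]
  simp only [smul_eq_mul, invOf_eq_inv] at this ⊢
  linarith

theorem ConvexOn.midpointGap_lineMap_le (hF : ConvexOn ℝ univ F) (z : E) {t : ℝ} (ht₀ : 0 ≤ t)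
    (ht₁ : t ≤ 1) : midpointGap F w (AffineMap.lineMap w z t) ≤ midpointGap F w z := by
  have key := (hF.comp_affineMap (AffineMap.lineMap w z)).monotoneOn_sub_two_mul_apply_half
    (mem_Ici.2 ht₀) (mem_Ici.2 zero_le_one) ht₁
  have hmid : ∀ s : ℝ,
      midpoint ℝ (AffineMap.lineMap w z s) w = AffineMap.lineMap w z (s / 2) := by
    intro s
    simp only [midpoint_eq_smul_add, AffineMap.lineMap_apply_module, invOf_eq_inv]
    module
  have hz : midpoint ℝ z w = AffineMap.lineMap w z (1 / 2 : ℝ) := by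
    simpa using hmid 1
  simp only [Function.comp_apply, AffineMap.lineMap_apply_one] at key
  unfold midpointGap
  rw [hmid, hz]
  linarith

theorem ConvexOn.continuous [FiniteDimensional ℝ E] (hF : ConvexOn ℝ univ F) : Continuous F :=
  continuousOn_univ.1 (hF.continuousOn isOpen_univ)

/-- The gap is monotone along rays from `w`, so away from `w` it is bounded below by its minimum
on a sphere, positive by strict convexity and compactness. -/
theorem StrictConvexOn.exists_pos_le_midpointGap [FiniteDimensional ℝ E]
    (hF : StrictConvexOn ℝ univ F) (w : E) {ε : ℝ} (hε : 0 < ε) :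
    ∃ m > 0, ∀ z, ε ≤ dist z w → m ≤ midpointGap F w z := by
  have hsphere : ∀ z, ε ≤ dist z w →
      ∃ y ∈ sphere w ε, midpointGap F w y ≤ midpointGap F w z := by
    intro z hz
    have hd : 0 < dist z w := hε.trans_le hz
    refine ⟨AffineMap.lineMap w z (ε / dist z w), ?_,
      hF.convexOn.midpointGap_lineMap_le z (by positivity) ((div_le_one hd).2 hz)⟩
    rw [mem_sphere, dist_lineMap_left, Real.norm_of_nonneg (by positivity), dist_comm w z,
      div_mul_cancel₀ _ hd.ne']
  by_cases hne : (sphere w ε).Nonempty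
  · have hcont : Continuous (midpointGap F w) := by
      have := hF.convexOn.continuous
      unfold midpointGap
      simp only [midpoint_eq_smul_add]
      fun_prop
    obtain ⟨y₀, hy₀, hmin⟩ := (isCompact_sphere w ε).exists_isMinOn hne hcont.continuousOn
    refine ⟨_, hF.midpointGap_pos (ne_of_mem_sphere hy₀ hε.ne'), fun z hz => ?_⟩
    obtain ⟨y, hy, hyz⟩ := hsphere z hz
    exact (hmin hy).trans hyz
  · refine ⟨1, one_pos, fun z hz => ?_⟩
    obtain ⟨y, hy, -⟩ := hsphere z hz
    exact absurd ⟨y, hy⟩ hne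

theorem StrictConvexOn.tendsto_of_tendsto_midpointGap [FiniteDimensional ℝ E]
    (hF : StrictConvexOn ℝ univ F) {ι : Type*} {l : Filter ι} {z : ι → E}
    (h : Tendsto (fun i => midpointGap F w (z i)) l (𝓝 0)) : Tendsto z l (𝓝 w) := by
  refine Metric.tendsto_nhds.2 fun ε hε => ?_
  obtain ⟨m, hm, hgap⟩ := hF.exists_pos_le_midpointGap w hε
  filter_upwards [h.eventually (gt_mem_nhds hm)] with i hi
  exact not_le.1 fun hzi => (hgap _ hzi).not_gt hi

end MidpointGap

section Integrability

variable {α : Type*} [MeasurableSpace α] {μ : Measure α}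
  {E : Type*} [NormedAddCommGroup E] {p : ℝ}

theorem abs_le_of_growth {F : E → ℝ} {c c₂ : ℝ} (hc₂ : 0 ≤ c₂) (hlow : ∀ z, -c ≤ F z)
    (hup : ∀ z, F z ≤ c₂ * ‖z‖ ^ p + c) (z : E) : |F z| ≤ c₂ * ‖z‖ ^ p + c :=
  abs_le.2 ⟨by linarith [hlow z, (by positivity : 0 ≤ c₂ * ‖z‖ ^ p)], hup z⟩

theorem MeasureTheory.MemLp.integrable_comp_of_abs_le [IsFiniteMeasure μ] {f : α → E}
    (hf : MemLp f (ENNReal.ofReal p) μ) (hp : 0 ≤ p) {F : E → ℝ} (hF : Continuous F) {C c : ℝ}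
    (hFb : ∀ z, |F z| ≤ C * ‖z‖ ^ p + c) : Integrable (fun q => F (f q)) μ := by
  have hpow := hf.integrable_norm_rpow'
  rw [ENNReal.toReal_ofReal hp] at hpow
  exact ((hpow.const_mul C).add (integrable_const c)).mono' (hF.comp_aestronglyMeasurable hf.1)
    (ae_of_all _ fun q => hFb (f q))

theorem MeasureTheory.MemLp.integrable_inner [InnerProductSpace ℝ E] {f g : α → E} (hp : 1 < p)
    (hf : MemLp f (ENNReal.ofReal p) μ) (hg : MemLp g (ENNReal.ofReal (p / (p - 1))) μ) :
    Integrable (fun q => ⟪f q, g q⟫) μ := by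
  have : ENNReal.HolderConjugate (ENNReal.ofReal p) (ENNReal.ofReal (p / (p - 1))) :=
    (Real.HolderConjugate.conjExponent hp).ennrealOfReal
  refine memLp_one_iff_integrable.1 (hf.of_bilin (fun x y => ⟪x, y⟫) 1 hg (hf.1.inner hg.1)
    (ae_of_all _ fun q => ?_))
  simpa using nnnorm_inner_le_nnnorm (𝕜 := ℝ) (f q) (g q)

theorem MeasureTheory.MemLp.memLp_conjExponent_of_norm_le [IsFiniteMeasure μ] {u g : α → E}
    (hp : 1 < p) (hu : MemLp u (ENNReal.ofReal p) μ) (hg : AEStronglyMeasurable g μ) {K : ℝ}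
    (hgu : ∀ q, ‖g q‖ ≤ K * (1 + ‖u q‖) ^ (p - 1)) :
    MemLp g (ENNReal.ofReal (p / (p - 1))) μ := by
  have hpow := ((memLp_const (1 : ℝ)).add hu.norm).norm_rpow_div (ENNReal.ofReal (p - 1))
  rw [← ENNReal.ofReal_div_of_pos (by linarith), ENNReal.toReal_ofReal (by linarith)] at hpow
  refine (hpow.const_mul K).of_le hg (ae_of_all _ fun q => ?_)
  simp only [Pi.add_apply, Real.norm_eq_abs]
  rw [abs_of_nonneg (by positivity : (0 : ℝ) ≤ 1 + ‖u q‖)]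
  exact (hgu q).trans (le_abs_self _)

theorem MeasureTheory.MemLp.integrable_midpointGap [IsFiniteMeasure μ] [NormedSpace ℝ E]
    {u u₀ : α → E} (hu : MemLp u (ENNReal.ofReal p) μ) (hu₀ : MemLp u₀ (ENNReal.ofReal p) μ)
    (hp : 0 ≤ p) {F : E → ℝ} (hFc : Continuous F) {C c : ℝ}
    (hFb : ∀ z, |F z| ≤ C * ‖z‖ ^ p + c) :
    Integrable (fun q => midpointGap F (u₀ q) (u q)) μ := by
  have hmid : MemLp (fun q => midpoint ℝ (u q) (u₀ q)) (ENNReal.ofReal p) μ := by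
    simp_rw [midpoint_eq_smul_add]
    exact (hu.add hu₀).const_smul _
  exact (((hu.integrable_comp_of_abs_le hp hFc hFb).add
    (hu₀.integrable_comp_of_abs_le hp hFc hFb)).div_const 2).sub
    (hmid.integrable_comp_of_abs_le hp hFc hFb)

theorem tendsto_integral_comp_isProxPoint [IsFiniteMeasure μ] {F : E → ℝ} (hFc : Continuous F)
    {m : ℝ} (hm : ∀ z, m ≤ F z) {a : ℕ → ℝ} (ha₀ : ∀ k, 0 ≤ a k) (ha : Tendsto a atTop atTop)
    {P : ℕ → E → E} (hP : ∀ k w, IsProxPoint F (a k) w (P k w)) (hPc : ∀ k, Continuous (P k))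
    {u₀ : α → E} (hu₀ : AEStronglyMeasurable u₀ μ) (hint : Integrable (fun q => F (u₀ q)) μ) :
    Tendsto (fun k => ∫ q, F (P k (u₀ q)) ∂μ) atTop (𝓝 (∫ q, F (u₀ q) ∂μ)) := by
  refine tendsto_integral_of_dominated_convergence (fun q => |F (u₀ q)| + |m|)
    (fun k => (hFc.comp (hPc k)).comp_aestronglyMeasurable hu₀)
    (hint.abs.add (integrable_const _)) (fun k => ae_of_all _ fun q => ?_)
    (ae_of_all _ fun q => (hFc.tendsto _).comp (IsProxPoint.tendsto hm ha fun k => hP k (u₀ q)))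
  have hle := (hP k (u₀ q)).apply_le (ha₀ k)
  rw [Real.norm_eq_abs, abs_le]
  constructor <;> linarith [hm (P k (u₀ q)), le_abs_self (F (u₀ q)), neg_abs_le m,
    abs_nonneg (F (u₀ q)), abs_nonneg m]

theorem exists_eLpNorm_le_of_bddAbove_integral [IsFiniteMeasure μ] {ι : Type*} (hp : 0 < p)
    {F : E → ℝ} {c c₁ : ℝ} (hc₁ : 0 < c₁) (hlow : ∀ z, c₁ * ‖z‖ ^ p - c ≤ F z) {u : ι → α → E}
    (hu : ∀ i, MemLp (u i) (ENNReal.ofReal p) μ) (hFu : ∀ i, Integrable (fun q => F (u i q)) μ)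
    (hbdd : BddAbove (range fun i => ∫ q, F (u i q) ∂μ)) :
    ∃ M : ℝ≥0, ∀ i, eLpNorm (u i) (ENNReal.ofReal p) μ ≤ M := by
  obtain ⟨B, hB⟩ := hbdd
  refine ⟨(((B + c * μ.real univ) / c₁) ^ p⁻¹).toNNReal, fun i => ?_⟩
  have hpow := (hu i).integrable_norm_rpow'
  rw [ENNReal.toReal_ofReal hp.le] at hpow
  have hbound : ∫ q, ‖u i q‖ ^ p ∂μ ≤ (B + c * μ.real univ) / c₁ := by
    rw [le_div_iff₀ hc₁, mul_comm, ← integral_const_mul]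
    calc ∫ q, c₁ * ‖u i q‖ ^ p ∂μ ≤ ∫ q, (F (u i q) + c) ∂μ :=
          integral_mono (hpow.const_mul c₁) ((hFu i).add (integrable_const c))
            fun q => by linarith [hlow (u i q)]
      _ = ∫ q, F (u i q) ∂μ + c * μ.real univ := by
          rw [integral_add (hFu i) (integrable_const c), integral_const, smul_eq_mul, mul_comm]
      _ ≤ B + c * μ.real univ := by linarith [hB ⟨i, rfl⟩]
  rw [(hu i).eLpNorm_eq_integral_rpow_norm (by simpa using hp) ENNReal.ofReal_ne_top,
    ENNReal.toReal_ofReal hp.le]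
  exact ENNReal.ofReal_le_ofReal (Real.rpow_le_rpow (integral_nonneg fun q => by positivity)
    hbound (by positivity))

end Integrability

section Convergence

variable {α : Type*} [MeasurableSpace α] {μ : Measure α}

theorem exists_seq_ae_tendsto_zero_of_tendsto_integral {f : ℕ → α → ℝ} (hf : ∀ n q, 0 ≤ f n q)
    (hint : ∀ n, Integrable (f n) μ) (h : Tendsto (fun n => ∫ q, f n q ∂μ) atTop (𝓝 0)) :
    ∃ φ : ℕ → ℕ, StrictMono φ ∧ ∀ᵐ q ∂μ, Tendsto (fun k => f (φ k) q) atTop (𝓝 0) := by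
  have hnorm : ∀ n, eLpNorm (f n) 1 μ = ENNReal.ofReal (∫ q, f n q ∂μ) := fun n => by
    rw [ofReal_integral_eq_lintegral_ofReal (hint n) (ae_of_all _ (hf n)),
      eLpNorm_one_eq_lintegral_enorm]
    exact lintegral_congr fun q => Real.enorm_of_nonneg (hf n q)
  have hmeas : TendstoInMeasure μ f atTop 0 :=
    tendstoInMeasure_of_tendsto_eLpNorm one_ne_zero (fun n => (hint n).1)
      aestronglyMeasurable_zero
      (by simpa only [sub_zero, hnorm, ENNReal.ofReal_zero] using ENNReal.tendsto_ofReal h)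
  simpa using hmeas.exists_seq_tendsto_ae

theorem unifIntegrable_one_of_eLpNorm_le {β : Type*} [NormedAddCommGroup β] {ι : Type*}
    {p : ℝ≥0∞} (hp : 1 < p) {f : ι → α → β} (hf : ∀ i, AEStronglyMeasurable (f i) μ) {M : ℝ≥0}
    (hM : ∀ i, eLpNorm (f i) p μ ≤ M) : UnifIntegrable f 1 μ := by
  set r := 1 / (1 : ℝ≥0∞).toReal - 1 / p.toReal
  have hr : 0 < r := by
    rcases eq_or_ne p ∞ with rfl | hp_top
    · simp [r]
    have : 1 < p.toReal := by
      simpa using ENNReal.toReal_strict_mono hp_top hp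
    simp only [r, ENNReal.toReal_one, div_one, sub_pos]
    exact (div_lt_one (by linarith)).2 this
  intro ε hε
  -- Hölder on `s`: `‖f i‖_{L¹(s)} ≤ M μ(s)^r`
  refine ⟨(ε / (M + 1)) ^ r⁻¹, by positivity, fun i s hs hμs => ?_⟩
  rw [eLpNorm_indicator_eq_eLpNorm_restrict hs]
  calc eLpNorm (f i) 1 (μ.restrict s)
      ≤ eLpNorm (f i) p (μ.restrict s) * μ.restrict s univ ^ r :=
        eLpNorm_le_eLpNorm_mul_rpow_measure_univ hp.le (hf i).restrict
    _ ≤ M * ENNReal.ofReal ((ε / (M + 1)) ^ r⁻¹) ^ r := by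
        rw [Measure.restrict_apply_univ]
        gcongr
        exact (eLpNorm_mono_measure _ Measure.restrict_le_self).trans (hM i)
    _ = ENNReal.ofReal (M * (ε / (M + 1))) := by
        rw [ENNReal.ofReal_rpow_of_nonneg (by positivity) hr.le,
          ← Real.rpow_mul (by positivity), inv_mul_cancel₀ hr.ne', Real.rpow_one,
          ENNReal.ofReal_mul (by positivity), ENNReal.ofReal_coe_nnreal]
    _ ≤ ENNReal.ofReal ε := by
        refine ENNReal.ofReal_le_ofReal ?_
        rw [mul_div_assoc', div_le_iff₀ (by positivity)]
        nlinarith [M.coe_nonneg]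

theorem tendsto_integral_norm_sub_of_eLpNorm_le [IsFiniteMeasure μ] {β : Type*}
    [NormedAddCommGroup β] {p : ℝ≥0∞} (hp : 1 < p) {f : ℕ → α → β} {g : α → β}
    (hf : ∀ n, AEStronglyMeasurable (f n) μ) (hg : Integrable g μ) {M : ℝ≥0}
    (hM : ∀ n, eLpNorm (f n) p μ ≤ M)
    (hfg : ∀ᵐ q ∂μ, Tendsto (fun n => f n q) atTop (𝓝 (g q))) :
    Tendsto (fun n => ∫ q, ‖f n q - g q‖ ∂μ) atTop (𝓝 0) := by
  have h := tendsto_Lp_finite_of_tendsto_ae le_rfl ENNReal.one_ne_top hf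
    (memLp_one_iff_integrable.2 hg) (unifIntegrable_one_of_eLpNorm_le hp hf hM) hfg
  have e : ∀ n, ∫ q, ‖f n q - g q‖ ∂μ = (eLpNorm (f n - g) 1 μ).toReal := fun n => by
    rw [toReal_eLpNorm ((hf n).sub hg.1), lpNorm_one_eq_integral_norm ((hf n).sub hg.1)]
    rfl
  simpa [e, Function.comp_def] using (ENNReal.tendsto_toReal ENNReal.zero_ne_top).comp h

end Convergence

section WeakConvergence

variable {α : Type*} [MeasurableSpace α] {μ : Measure α}
  {E : Type*} [NormedAddCommGroup E] [InnerProductSpace ℝ E] {p : ℝ}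

def WeakLpTendsto (μ : Measure α) (p : ℝ) (u : ℕ → α → E) (u₀ : α → E) : Prop :=
  ∀ g : α → E, MemLp g (ENNReal.ofReal (p / (p - 1))) μ →
    Tendsto (fun N => ∫ q, ⟪u N q, g q⟫ ∂μ) atTop (𝓝 (∫ q, ⟪u₀ q, g q⟫ ∂μ))

variable {u : ℕ → α → E} {u₀ : α → E}

namespace WeakLpTendsto

theorem midpoint (hp : 1 < p) (hw : WeakLpTendsto μ p u u₀)
    (hu : ∀ N, MemLp (u N) (ENNReal.ofReal p) μ) (hu₀ : MemLp u₀ (ENNReal.ofReal p) μ) :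
    WeakLpTendsto μ p (fun N q => _root_.midpoint ℝ (u N q) (u₀ q)) u₀ := by
  intro g hg
  have hmid : ∀ f : α → E, MemLp f (ENNReal.ofReal p) μ →
      ∫ q, ⟪_root_.midpoint ℝ (f q) (u₀ q), g q⟫ ∂μ =
        (∫ q, ⟪f q, g q⟫ ∂μ + ∫ q, ⟪u₀ q, g q⟫ ∂μ) / 2 := by
    intro f hf
    rw [← integral_add (hf.integrable_inner hp hg) (hu₀.integrable_inner hp hg), ← integral_div]
    congr 1 with q
    rw [midpoint_eq_smul_add, inner_smul_left, inner_add_left]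
    simp only [invOf_eq_inv, conj_trivial]
    ring
  convert ((hw g hg).add_const (∫ q, ⟪u₀ q, g q⟫ ∂μ)).div_const 2 using 1
  · exact funext fun N => hmid (u N) (hu N)
  · ring_nf

theorem eventually_lt_integral_of_isSubgradientAt [IsFiniteMeasure μ] (hp : 1 < p)
    (hw : WeakLpTendsto μ p u u₀) (hu : ∀ N, MemLp (u N) (ENNReal.ofReal p) μ)
    (hu₀ : MemLp u₀ (ENNReal.ofReal p) μ) {F : E → ℝ} (hFc : Continuous F) {C c : ℝ}
    (hFb : ∀ z, |F z| ≤ C * ‖z‖ ^ p + c) {x ξ : α → E} (hx : MemLp x (ENNReal.ofReal p) μ)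
    (hξ : MemLp ξ (ENNReal.ofReal (p / (p - 1))) μ) (hsub : ∀ q, IsSubgradientAt F (x q) (ξ q))
    (hdir : ∀ q, 0 ≤ ⟪ξ q, u₀ q - x q⟫) :
    ∀ b < ∫ q, F (x q) ∂μ, ∀ᶠ N in atTop, b < ∫ q, F (u N q) ∂μ := by
  intro b hb
  have hp0 : 0 ≤ p := by linarith
  have hlim := tendsto_const_nhds (x := ∫ q, F (x q) ∂μ) |>.add
    ((hw ξ hξ).sub_const (∫ q, ⟪x q, ξ q⟫ ∂μ))
  have hgap : 0 ≤ ∫ q, ⟪u₀ q, ξ q⟫ ∂μ - ∫ q, ⟪x q, ξ q⟫ ∂μ := by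
    rw [← integral_sub (hu₀.integrable_inner hp hξ) (hx.integrable_inner hp hξ)]
    refine integral_nonneg fun q => ?_
    rw [← inner_sub_left, real_inner_comm]
    exact hdir q
  filter_upwards [hlim.eventually (lt_mem_nhds (hb.trans_le (le_add_of_nonneg_right hgap)))]
    with N hN
  have hFx := hx.integrable_comp_of_abs_le hp0 hFc hFb
  have hux : Integrable (fun q => ⟪u N q, ξ q⟫ - ⟪x q, ξ q⟫) μ :=
    ((hu N).integrable_inner hp hξ).sub (hx.integrable_inner hp hξ)
  calc b < _ := hN
    _ = ∫ q, (F (x q) + (⟪u N q, ξ q⟫ - ⟪x q, ξ q⟫)) ∂μ := by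
      rw [integral_add hFx hux,
        integral_sub ((hu N).integrable_inner hp hξ) (hx.integrable_inner hp hξ)]
    _ ≤ ∫ q, F (u N q) ∂μ :=
      integral_mono (hFx.add hux) ((hu N).integrable_comp_of_abs_le hp0 hFc hFb) fun q => by
        have := hsub q (u N q)
        rw [inner_sub_right, real_inner_comm (x q), real_inner_comm (u N q)] at this
        exact this

theorem eventually_lt_integral [IsFiniteMeasure μ] [FiniteDimensional ℝ E]
    (hp : 1 < p) (hw : WeakLpTendsto μ p u u₀) (hu : ∀ N, MemLp (u N) (ENNReal.ofReal p) μ)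
    (hu₀ : MemLp u₀ (ENNReal.ofReal p) μ) {F : E → ℝ} (hF : ConvexOn ℝ univ F) {c c₂ : ℝ}
    (hc : 0 ≤ c) (hc₂ : 0 ≤ c₂) (hlow : ∀ z, -c ≤ F z) (hup : ∀ z, F z ≤ c₂ * ‖z‖ ^ p + c) :
    ∀ b < ∫ q, F (u₀ q) ∂μ, ∀ᶠ N in atTop, b < ∫ q, F (u N q) ∂μ := by
  have hFc := hF.continuous
  have hFb := abs_le_of_growth hc₂ hlow hup
  choose P hP using fun (k : ℕ) (w : E) => exists_isProxPoint hFc hlow k.cast_add_one_pos w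
  have hsub : ∀ k w, IsSubgradientAt F (P k w) ((2 * ((k : ℝ) + 1)) • (w - P k w)) :=
    fun k w => (hP k w).isSubgradientAt hF
  have hPlip : ∀ k, LipschitzWith 1 (P k) := fun k =>
    lipschitzWith_one_of_isSubgradientAt k.cast_add_one_pos (hsub k)
  have hPnorm : ∀ k w, ‖P k w‖ ≤ (1 + ‖P k 0‖) * (1 + ‖w‖) := fun k w => by
    have := (hPlip k).norm_sub_le w 0
    rw [NNReal.coe_one, one_mul, sub_zero] at this
    nlinarith [norm_le_norm_sub_add (P k w) (P k 0), norm_nonneg w, norm_nonneg (P k 0)]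
  intro b hb
  obtain ⟨k, hk⟩ := ((tendsto_integral_comp_isProxPoint hFc hlow
    (fun k => k.cast_add_one_pos.le)
    (tendsto_atTop_add_const_right _ 1 tendsto_natCast_atTop_atTop) hP
    (fun k => (hPlip k).continuous) hu₀.1
    (hu₀.integrable_comp_of_abs_le (by linarith) hFc hFb)).eventually (lt_mem_nhds hb)).exists
  have hPu₀ : AEStronglyMeasurable (fun q => P k (u₀ q)) μ :=
    (hPlip k).continuous.comp_aestronglyMeasurable hu₀.1
  have hx : MemLp (fun q => P k (u₀ q)) (ENNReal.ofReal p) μ := by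
    refine (((memLp_const (1 : ℝ)).add hu₀.norm).const_mul (1 + ‖P k 0‖)).of_le hPu₀
      (ae_of_all _ fun q => (hPnorm k (u₀ q)).trans (le_of_eq ?_))
    simp only [Pi.add_apply, Real.norm_eq_abs]
    rw [abs_of_nonneg (by positivity)]
  have hξ : MemLp (fun q => (2 * ((k : ℝ) + 1)) • (u₀ q - P k (u₀ q)))
      (ENNReal.ofReal (p / (p - 1))) μ :=
    hu₀.memLp_conjExponent_of_norm_le hp ((hu₀.1.sub hPu₀).const_smul _)
      fun q => (hsub k (u₀ q)).norm_le_mul_rpow hp.le hc hc₂ hlow hup (hPnorm k (u₀ q))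
  refine hw.eventually_lt_integral_of_isSubgradientAt hp hu hu₀ hFc hFb hx hξ
    (fun q => hsub k (u₀ q)) (fun q => ?_) b hk
  rw [inner_smul_left, real_inner_self_eq_norm_sq]
  simp only [conj_trivial]
  positivity

theorem tendsto_integral_midpointGap [IsFiniteMeasure μ] [FiniteDimensional ℝ E]
    (hp : 1 < p) (hw : WeakLpTendsto μ p u u₀) (hu : ∀ N, MemLp (u N) (ENNReal.ofReal p) μ)
    (hu₀ : MemLp u₀ (ENNReal.ofReal p) μ) {F : E → ℝ} (hF : ConvexOn ℝ univ F) {c c₂ : ℝ}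
    (hc : 0 ≤ c) (hc₂ : 0 ≤ c₂) (hlow : ∀ z, -c ≤ F z) (hup : ∀ z, F z ≤ c₂ * ‖z‖ ^ p + c)
    (hFu : Tendsto (fun N => ∫ q, F (u N q) ∂μ) atTop (𝓝 (∫ q, F (u₀ q) ∂μ))) :
    Tendsto (fun N => ∫ q, midpointGap F (u₀ q) (u N q) ∂μ) atTop (𝓝 0) := by
  have hp0 : 0 ≤ p := by linarith
  have hFc := hF.continuous
  have hFb := abs_le_of_growth hc₂ hlow hup
  have hmid : ∀ N, MemLp (fun q => _root_.midpoint ℝ (u N q) (u₀ q)) (ENNReal.ofReal p) μ :=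
    fun N => by
      simp_rw [midpoint_eq_smul_add]
      exact ((hu N).add hu₀).const_smul _
  have hlsc := (hw.midpoint hp hu hu₀).eventually_lt_integral hp hmid hu₀ hF hc hc₂ hlow hup
  have hsplit : ∀ N, ∫ q, midpointGap F (u₀ q) (u N q) ∂μ =
      (∫ q, F (u N q) ∂μ + ∫ q, F (u₀ q) ∂μ) / 2 -
        ∫ q, F (_root_.midpoint ℝ (u N q) (u₀ q)) ∂μ := by
    intro N
    have hFuN := (hu N).integrable_comp_of_abs_le hp0 hFc hFb
    have hFu₀ := hu₀.integrable_comp_of_abs_le hp0 hFc hFb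
    have hmean : Integrable (fun q => (F (u N q) + F (u₀ q)) / 2) μ :=
      (hFuN.add hFu₀).div_const 2
    unfold midpointGap
    rw [integral_sub hmean ((hmid N).integrable_comp_of_abs_le hp0 hFc hFb), integral_div,
      integral_add hFuN hFu₀]
  refine tendsto_order.2 ⟨fun a ha => Eventually.of_forall fun N =>
    ha.trans_le (integral_nonneg fun q => hF.midpointGap_nonneg _), fun a ha => ?_⟩
  filter_upwards [hlsc _ (sub_lt_self _ (half_pos ha)),
    hFu.eventually_lt_const (lt_add_of_pos_right _ (half_pos ha))] with N h₁ h₂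
  rw [hsplit N]
  linarith

theorem exists_subseq_ae_tendsto [IsFiniteMeasure μ] [FiniteDimensional ℝ E]
    (hp : 1 < p) (hw : WeakLpTendsto μ p u u₀) (hu : ∀ N, MemLp (u N) (ENNReal.ofReal p) μ)
    (hu₀ : MemLp u₀ (ENNReal.ofReal p) μ) {F : E → ℝ} (hF : StrictConvexOn ℝ univ F) {c c₂ : ℝ}
    (hc : 0 ≤ c) (hc₂ : 0 ≤ c₂) (hlow : ∀ z, -c ≤ F z) (hup : ∀ z, F z ≤ c₂ * ‖z‖ ^ p + c)
    (hFu : Tendsto (fun N => ∫ q, F (u N q) ∂μ) atTop (𝓝 (∫ q, F (u₀ q) ∂μ))) :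
    ∃ φ : ℕ → ℕ, StrictMono φ ∧ ∀ᵐ q ∂μ, Tendsto (fun k => u (φ k) q) atTop (𝓝 (u₀ q)) := by
  obtain ⟨φ, hφ, hae⟩ := exists_seq_ae_tendsto_zero_of_tendsto_integral
    (fun N q => hF.convexOn.midpointGap_nonneg (u N q))
    (fun N => (hu N).integrable_midpointGap hu₀ (by linarith) hF.convexOn.continuous
      (abs_le_of_growth hc₂ hlow hup))
    (hw.tendsto_integral_midpointGap hp hu hu₀ hF.convexOn hc hc₂ hlow hup hFu)
  exact ⟨φ, hφ, hae.mono fun q hq => hF.tendsto_of_tendsto_midpointGap hq⟩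

end WeakLpTendsto

end WeakConvergence

theorem stmt_4_general {d : ℕ} {E : Type*} [NormedAddCommGroup E] [InnerProductSpace ℝ E]
    [FiniteDimensional ℝ E]
    (Ω : Set (EuclideanSpace ℝ (Fin d)))
    (hΩb : Bornology.IsBounded Ω)
    (T p c c₁ c₂ : ℝ) (hp : 1 < p) (hc₁ : 0 < c₁) (hc₂ : 0 < c₂) (hc : 0 ≤ c)
    (F : E → ℝ) (hconv : StrictConvexOn ℝ Set.univ F)
    (hlow : ∀ z : E, c₁ * ‖z‖ ^ p - c ≤ F z)
    (hup : ∀ z : E, F z ≤ c₂ * ‖z‖ ^ p + c)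
    (v : ℕ → ℝ × EuclideanSpace ℝ (Fin d) → E)
    (vlim : ℝ × EuclideanSpace ℝ (Fin d) → E)
    (μ : Measure (ℝ × EuclideanSpace ℝ (Fin d)))
    (hμ : μ = (volume.restrict (Set.Ioo 0 T)).prod (volume.restrict Ω))
    (hmem : ∀ N, MemLp (v N) (ENNReal.ofReal p) μ)
    (hmeml : MemLp vlim (ENNReal.ofReal p) μ)
    (hweak : ∀ g : ℝ × EuclideanSpace ℝ (Fin d) → E,
      MemLp g (ENNReal.ofReal (p / (p - 1))) μ →
      Tendsto (fun N => ∫ q, (inner ℝ (v N q) (g q) : ℝ) ∂μ) atTop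
        (nhds (∫ q, (inner ℝ (vlim q) (g q) : ℝ) ∂μ)))
    (hF : Tendsto (fun N => ∫ q, F (v N q) ∂μ) atTop (nhds (∫ q, F (vlim q) ∂μ))) :
    ∃ φ : ℕ → ℕ, StrictMono φ ∧
      (∀ᵐ q ∂μ, Tendsto (fun k => v (φ k) q) atTop (nhds (vlim q))) ∧
      Tendsto (fun k => ∫ q, ‖v (φ k) q - vlim q‖ ∂μ) atTop (nhds 0) := by
  have : IsFiniteMeasure μ := by
    have : IsFiniteMeasure (volume.restrict Ω) := ⟨by simpa using hΩb.measure_lt_top⟩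
    rw [hμ]
    infer_instance
  have hlow' : ∀ z, -c ≤ F z := fun z =>
    le_trans (by linarith [mul_nonneg hc₁.le (Real.rpow_nonneg (norm_nonneg z) p)]) (hlow z)
  obtain ⟨φ, hφ, hae⟩ :=
    WeakLpTendsto.exists_subseq_ae_tendsto hp hweak hmem hmeml hconv hc hc₂.le hlow' hup hF
  obtain ⟨M, hM⟩ := exists_eLpNorm_le_of_bddAbove_integral (by linarith) hc₁ hlow hmem
    (fun N => (hmem N).integrable_comp_of_abs_le (by linarith) hconv.convexOn.continuous
      (abs_le_of_growth hc₂.le hlow' hup))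
    hF.bddAbove_range
  exact ⟨φ, hφ, hae, tendsto_integral_norm_sub_of_eLpNorm_le (ENNReal.one_lt_ofReal.2 hp)
    (fun k => (hmem (φ k)).1) (hmeml.integrable (ENNReal.one_le_ofReal.2 hp.le))
    (fun k => hM (φ k)) hae⟩

/-- If `F` is strictly convex with two-sided `p`-growth, `v_N ⇀ v` weakly in
`L^p((0,T) × Ω; E)` and `∫∫ F(v_N) → ∫∫ F(v)`, then (along a subsequence converging almost
everywhere) `v_N → v` strongly in `L¹((0,T) × Ω; E)`. -/
theorem stmt_4 {d : ℕ} {E : Type*} [NormedAddCommGroup E] [InnerProductSpace ℝ E]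
    [FiniteDimensional ℝ E]
    (Ω : Set (EuclideanSpace ℝ (Fin d))) (hΩm : MeasurableSet Ω)
    (hΩb : Bornology.IsBounded Ω)
    (T p c c₁ c₂ : ℝ) (hT : 0 < T) (hp : 1 < p) (hc₁ : 0 < c₁) (hc₂ : 0 < c₂) (hc : 0 ≤ c)
    (F : E → ℝ) (hconv : StrictConvexOn ℝ Set.univ F)
    (hlow : ∀ z : E, c₁ * ‖z‖ ^ p - c ≤ F z)
    (hup : ∀ z : E, F z ≤ c₂ * ‖z‖ ^ p + c)
    (v : ℕ → ℝ × EuclideanSpace ℝ (Fin d) → E)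
    (vlim : ℝ × EuclideanSpace ℝ (Fin d) → E)
    (μ : Measure (ℝ × EuclideanSpace ℝ (Fin d)))
    (hμ : μ = (volume.restrict (Set.Ioo 0 T)).prod (volume.restrict Ω))
    (hmem : ∀ N, MemLp (v N) (ENNReal.ofReal p) μ)
    (hmeml : MemLp vlim (ENNReal.ofReal p) μ)
    (hweak : ∀ g : ℝ × EuclideanSpace ℝ (Fin d) → E,
      MemLp g (ENNReal.ofReal (p / (p - 1))) μ →
      Tendsto (fun N => ∫ q, (inner ℝ (v N q) (g q) : ℝ) ∂μ) atTop
        (nhds (∫ q, (inner ℝ (vlim q) (g q) : ℝ) ∂μ)))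
    (hF : Tendsto (fun N => ∫ q, F (v N q) ∂μ) atTop (nhds (∫ q, F (vlim q) ∂μ))) :
    ∃ φ : ℕ → ℕ, StrictMono φ ∧
      (∀ᵐ q ∂μ, Tendsto (fun k => v (φ k) q) atTop (nhds (vlim q))) ∧
      Tendsto (fun k => ∫ q, ‖v (φ k) q - vlim q‖ ∂μ) atTop (nhds 0) :=
  stmt_4_general Ω hΩb T p c c₁ c₂ hp hc₁ hc₂ hc F hconv hlow hup v vlim μ hμ hmem hmeml hweak hF
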